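/- arXiv:2210.14167 — 5 statements merged into one kernel-verified Lean document; each statement's English description precedes it below -/
import Mathlib

section
/- Let γ > 0 and let f ∈ H_γ, i.e. f : ℂ → ℂ is entire with (2/(πγ²)) ∫_ℂ |f(z)|² exp((z − conj(z))²/γ²) dA(z) < ∞. Then for every w ∈ ℂ, f(w) = (2/(πγ²)) ∫_ℂ f(z) · conj(K_γ(z,w)) · exp((z − conj(z))²/γ²) dA(z). -/
open MeasureTheory Complex

/-- The Gaussian RBF kernel `K_γ(z,w) = exp(−(z − conj w)²/γ²)`. -/
noncomputable def rbfKernel (γ : ℝ) (z w : ℂ) : ℂ :=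
  Complex.exp (-(z - (starRingEnd ℂ) w) ^ 2 / (γ : ℂ) ^ 2)

/-- Squared-norm density of the RBF space `H_γ`:
`(2/(πγ²)) |f z|² exp((z − conj z)²/γ²)`, where
`exp((z − conj z)²/γ²) = exp(−4 (Im z)²/γ²)`. -/
noncomputable def rbfDensity (γ : ℝ) (f : ℂ → ℂ) (z : ℂ) : ℝ :=
  (2 / (Real.pi * γ ^ 2)) * ‖f z‖ ^ 2 * Real.exp (-(4 * z.im ^ 2) / γ ^ 2)

/-!
Substituting `z = w + u` and completing the square turns `f z · conj K(z, w) · e^{-4 (Im z)²/γ²}`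
into `e^{-2|u|²/γ²} φ(u)` with `φ(u) = f(w + u) e^{(u² + 2(w - conj w) u)/γ²}` entire and
`φ(0) = f(w)`. In polar coordinates the mean value property replaces `φ` on every circle about `0`
by `φ(0)`, so the integral is `φ(0) ∫ e^{-2|u|²/γ²} = (πγ²/2) f(w)`. Integrability follows from
`|f| |K(·, w)| ≤ (|f|² + |K(·, w)|²)/2`, as both `f` and `K(·, w)` lie in `H_γ`.
-/

open Set Real ComplexConjugate

section Polar

variable {E : Type*} [NormedAddCommGroup E] [NormedSpace ℝ E]

theorem Complex.integrableOn_smul_comp_polarCoord_symm {F : ℂ → E} (hF : Integrable F) :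
    IntegrableOn (fun p : ℝ × ℝ => p.1 • F (Complex.polarCoord.symm p)) polarCoord.target := by
  have hG : Integrable (F ∘ measurableEquivRealProd.symm) :=
    (volume_preserving_equiv_real_prod.symm.integrable_comp_emb
      measurableEquivRealProd.symm.measurableEmbedding).2 hF
  refine ((integrableOn_image_iff_integrableOn_abs_det_fderiv_smul volume
    polarCoord.open_target.measurableSet
    (fun p _ => (hasFDerivAt_polarCoord_symm p).hasFDerivWithinAt)
    polarCoord.symm.injOn _).1 hG.integrableOn).congr_fun (fun p hp => ?_)
    polarCoord.open_target.measurableSet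
  simp only [det_fderivPolarCoordSymm, abs_of_pos (show 0 < p.1 from hp.1)]
  rfl

theorem Complex.polarCoord_symm_eq_circleMap (p : ℝ × ℝ) :
    Complex.polarCoord.symm p = circleMap 0 p.1 p.2 := by
  simp [circleMap, Complex.exp_mul_I, ← ofReal_cos, ← ofReal_sin]

theorem integral_Ioo_circleMap_eq_smul_circleAverage (F : ℂ → E) (r : ℝ) :
    ∫ θ in Ioo (-π) π, F (circleMap 0 r θ) = (2 * π) • circleAverage F 0 r := by
  rw [circleAverage_eq_integral_add (-π), smul_inv_smul₀ (by positivity),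
    intervalIntegral.integral_comp_add_right (fun θ => F (circleMap 0 r θ)),
    intervalIntegral.integral_of_le (by linarith [pi_pos]), integral_Ioc_eq_integral_Ioo]
  ring_nf

theorem integral_eq_integral_Ioi_smul_circleAverage [CompleteSpace E] {F : ℂ → E}
    (hF : Integrable F) :
    ∫ u, F u = ∫ r in Ioi 0, (2 * π * r) • circleAverage F 0 r := by
  have hprod := Complex.integrableOn_smul_comp_polarCoord_symm hF
  rw [polarCoord_target, Measure.volume_eq_prod] at hprod
  calc ∫ u, F u = ∫ p in polarCoord.target, p.1 • F (Complex.polarCoord.symm p) :=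
        (Complex.integral_comp_polarCoord_symm F).symm
    _ = ∫ r in Ioi 0, ∫ θ in Ioo (-π) π, r • F (Complex.polarCoord.symm (r, θ)) := by
        rw [polarCoord_target, Measure.volume_eq_prod]
        exact setIntegral_prod _ hprod
    _ = ∫ r in Ioi 0, (2 * π * r) • circleAverage F 0 r := by
        refine setIntegral_congr_fun measurableSet_Ioi fun r _ => ?_
        simp only [Complex.polarCoord_symm_eq_circleMap]
        rw [integral_smul, integral_Ioo_circleMap_eq_smul_circleAverage, smul_smul, mul_comm]

end Polar

section MeanValue

variable {E : Type*} [NormedAddCommGroup E] [NormedSpace ℂ E] [CompleteSpace E]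

theorem circleAverage_radial_smul {f : ℂ → E} (hf : Differentiable ℂ f) (g : ℝ → ℝ) {r : ℝ}
    (hr : 0 ≤ r) : circleAverage (fun u => g ‖u‖ • f u) 0 r = g r • f 0 := by
  have hsphere : EqOn (fun u => g ‖u‖ • f u) (g r • f) (Metric.sphere 0 |r|) := fun u hu => by
    simp_all [abs_of_nonneg hr]
  rw [circleAverage_congr_sphere hsphere, circleAverage_smul, hf.diffContOnCl.circleAverage]

theorem integral_radial_smul_eq_smul_apply_zero {f : ℂ → E} (hf : Differentiable ℂ f) {g : ℝ → ℝ}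
    (hg : Integrable fun u : ℂ => g ‖u‖) (hgf : Integrable fun u => g ‖u‖ • f u) :
    ∫ u, g ‖u‖ • f u = (∫ u : ℂ, g ‖u‖) • f 0 := by
  have hconst : ∀ r ∈ Ioi (0 : ℝ), circleAverage (fun u => g ‖u‖) 0 r = g r := fun r hr =>
    circleAverage_const_on_circle fun u hu => by simp_all [abs_of_pos (mem_Ioi.1 hr)]
  rw [integral_eq_integral_Ioi_smul_circleAverage hg,
    integral_eq_integral_Ioi_smul_circleAverage hgf, ← integral_smul_const]
  refine setIntegral_congr_fun measurableSet_Ioi fun r hr => ?_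
  rw [circleAverage_radial_smul hf g (le_of_lt hr), hconst r hr, smul_smul, smul_eq_mul]

end MeanValue

theorem Complex.integrable_rexp_neg_mul_sq_norm {c : ℝ} (hc : 0 < c) :
    Integrable fun u : ℂ => rexp (-c * ‖u‖ ^ 2) := by
  simpa [Complex.norm_exp, ← ofReal_pow] using
    (GaussianFourier.integrable_cexp_neg_mul_sq_norm_add (V := ℂ)
      (show 0 < (c : ℂ).re from hc) 0 0).norm

theorem Complex.integral_rexp_neg_mul_sq_norm {c : ℝ} (hc : 0 < c) :
    ∫ u : ℂ, rexp (-c * ‖u‖ ^ 2) = π / c := by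
  rw [GaussianFourier.integral_rexp_neg_mul_sq_norm hc, finrank_real_complex]
  norm_num

section RBF

variable {γ : ℝ}

theorem continuous_rbfKernel_left (γ : ℝ) (w : ℂ) : Continuous fun z => rbfKernel γ z w := by
  unfold rbfKernel
  fun_prop

theorem integrable_rbfDensity {f : ℂ → ℂ} (hf : Continuous f)
    (hf2 : ∫⁻ z, ENNReal.ofReal (rbfDensity γ f z) < ⊤) : Integrable (rbfDensity γ f) := by
  refine ⟨by unfold rbfDensity; fun_prop, ?_⟩
  rw [hasFiniteIntegral_iff_ofReal (Filter.Eventually.of_forall fun z => by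
    unfold rbfDensity; positivity)]
  exact hf2

theorem norm_rbfKernel_sq_mul_exp_neg_im_sq (γ : ℝ) (z w : ℂ) :
    ‖rbfKernel γ z w‖ ^ 2 * rexp (-(4 * z.im ^ 2) / γ ^ 2) =
      rexp (4 * w.im ^ 2 / γ ^ 2) * rexp (-(2 / γ ^ 2) * ‖z - w‖ ^ 2) := by
  rw [rbfKernel, Complex.norm_exp, ← Real.exp_nat_mul, ← Real.exp_add, ← Real.exp_add,
    ← ofReal_pow, Complex.div_ofReal_re, Complex.sq_norm, Complex.normSq_apply]
  congr 1
  simp only [neg_re, pow_two, mul_re, sub_re, sub_im, conj_re, conj_im]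
  ring

theorem integrable_rbfDensity_rbfKernel (hγ : γ ≠ 0) (w : ℂ) :
    Integrable (rbfDensity γ fun z => rbfKernel γ z w) := by
  have hgauss := ((Complex.integrable_rexp_neg_mul_sq_norm (c := 2 / γ ^ 2)
    (by positivity)).comp_sub_right w).const_mul (2 / (π * γ ^ 2) * rexp (4 * w.im ^ 2 / γ ^ 2))
  refine hgauss.congr (Filter.Eventually.of_forall fun z => ?_)
  simp only [rbfDensity, mul_assoc, norm_rbfKernel_sq_mul_exp_neg_im_sq]

theorem integrable_mul_conj_mul_exp_neg_im_sq (hγ : γ ≠ 0) {f g : ℂ → ℂ} (hf : Continuous f)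
    (hg : Continuous g) (hf2 : Integrable (rbfDensity γ f)) (hg2 : Integrable (rbfDensity γ g)) :
    Integrable fun z => f z * conj (g z) * (rexp (-(4 * z.im ^ 2) / γ ^ 2) : ℂ) := by
  refine ((hf2.add hg2).const_mul (π * γ ^ 2 / 4)).mono' (by fun_prop)
    (Filter.Eventually.of_forall fun z => ?_)
  calc ‖f z * conj (g z) * (rexp (-(4 * z.im ^ 2) / γ ^ 2) : ℂ)‖
      = ‖f z‖ * ‖g z‖ * rexp (-(4 * z.im ^ 2) / γ ^ 2) := by
        rw [norm_mul, norm_mul, RCLike.norm_conj, norm_real, norm_of_nonneg (exp_nonneg _)]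
    _ ≤ (‖f z‖ ^ 2 + ‖g z‖ ^ 2) / 2 * rexp (-(4 * z.im ^ 2) / γ ^ 2) := by
        gcongr
        linarith [two_mul_le_add_sq ‖f z‖ ‖g z‖]
    _ = π * γ ^ 2 / 4 * (rbfDensity γ f z + rbfDensity γ g z) := by
        unfold rbfDensity
        field_simp
        ring

theorem conj_rbfKernel_add_mul_exp_neg_im_sq (γ : ℝ) (w u : ℂ) :
    conj (rbfKernel γ (w + u) w) * (rexp (-(4 * (w + u).im ^ 2) / γ ^ 2) : ℂ) =
      rexp (-(2 / γ ^ 2) * ‖u‖ ^ 2) • cexp ((u ^ 2 + 2 * (w - conj w) * u) / γ ^ 2) := by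
  have him : ∀ z : ℂ, ((z.im : ℂ)) ^ 2 = -((z - conj z) ^ 2) / 4 := fun z => by
    rw [Complex.sub_conj, mul_pow, Complex.I_sq]
    push_cast
    ring
  rw [rbfKernel, ← Complex.exp_conj, real_smul, Complex.ofReal_exp, Complex.ofReal_exp,
    ← Complex.exp_add, ← Complex.exp_add]
  congr 1
  push_cast
  rw [him, ← Complex.mul_conj']
  simp only [map_div₀, map_neg, map_pow, map_sub, map_add, Complex.conj_conj, Complex.conj_ofReal]
  ring

end RBF

theorem rbf_reproducing_property (γ : ℝ) (hγ : 0 < γ) (f : ℂ → ℂ)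
    (hf : Differentiable ℂ f)
    (hf2 : (∫⁻ z : ℂ, ENNReal.ofReal (rbfDensity γ f z)) < ⊤) (w : ℂ) :
    f w = ((2 / (Real.pi * γ ^ 2) : ℝ) : ℂ) *
      ∫ z : ℂ, f z * (starRingEnd ℂ) (rbfKernel γ z w) *
        (Real.exp (-(4 * z.im ^ 2) / γ ^ 2) : ℂ) := by
  set φ : ℂ → ℂ := fun u => f (w + u) * cexp ((u ^ 2 + 2 * (w - conj w) * u) / γ ^ 2)
  have hφ : Differentiable ℂ φ := by fun_prop
  have hshift : ∀ u, f (w + u) * conj (rbfKernel γ (w + u) w) *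
      (rexp (-(4 * (w + u).im ^ 2) / γ ^ 2) : ℂ) = rexp (-(2 / γ ^ 2) * ‖u‖ ^ 2) • φ u :=
    fun u => by rw [mul_assoc, conj_rbfKernel_add_mul_exp_neg_im_sq, mul_smul_comm]
  have hintegrable := (integrable_mul_conj_mul_exp_neg_im_sq hγ.ne' hf.continuous
    (continuous_rbfKernel_left γ w) (integrable_rbfDensity hf.continuous hf2)
    (integrable_rbfDensity_rbfKernel hγ.ne' w)).comp_add_left w
  simp only [hshift] at hintegrable
  have hsubst : ∫ z, f z * conj (rbfKernel γ z w) * (rexp (-(4 * z.im ^ 2) / γ ^ 2) : ℂ) =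
      ∫ u, rexp (-(2 / γ ^ 2) * ‖u‖ ^ 2) • φ u :=
    (integral_add_left_eq_self _ w).symm.trans (integral_congr_ae (.of_forall hshift))
  rw [hsubst, integral_radial_smul_eq_smul_apply_zero (g := fun r => rexp (-(2 / γ ^ 2) * r ^ 2)) hφ
    (Complex.integrable_rexp_neg_mul_sq_norm (by positivity)) hintegrable,
    Complex.integral_rexp_neg_mul_sq_norm (by positivity)]
  have hφ0 : φ 0 = f w := by simp [φ]
  rw [hφ0, real_smul, ← mul_assoc, ← ofReal_mul,
    show 2 / (π * γ ^ 2) * (π / (2 / γ ^ 2)) = 1 by field_simp, ofReal_one, one_mul]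
end

section
/- Let γ > 0. For all z, w ∈ ℂ one has (2/(πγ²)) ∫_ℂ conj(K_γ(u,w)) · K_γ(u,z) · exp((u − conj(u))²/γ²) dA(u) = K_γ(w,z); that is, the H_γ-inner product of the kernel sections K_γ(·,w) and K_γ(·,z) equals K_γ(w,z). -/
/-!
Writing `u = x + iy`, the weight `exp(-4y²/γ²)` exactly cancels the indefinite part of the
exponent of `conj K_γ(u,w) · K_γ(u,z)`, so the integrand is the exponential of a quadratic
polynomial in `(x, y)` with negative definite quadratic part `-(2/γ²)(x² + y²)`. The
two-dimensional Gaussian integral (completing the square) then evaluates it in closed form.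
-/

open MeasureTheory Complex

theorem Complex.integral_cexp_neg_mul_re_sq_add_im_sq_add {b : ℂ} (hb : 0 < b.re) (c₁ c₂ : ℂ) :
    ∫ u : ℂ, cexp (-b * ((u.re : ℂ) ^ 2 + (u.im : ℂ) ^ 2) + (c₁ * u.re + c₂ * u.im)) =
      Real.pi / b * cexp ((c₁ ^ 2 + c₂ ^ 2) / (4 * b)) := by
  rw [← volume_preserving_equiv_pi.symm.integral_comp measurableEquivPi.symm.measurableEmbedding]
  simpa [Fin.sum_univ_two] using GaussianFourier.integral_cexp_neg_mul_sum_add hb ![c₁, c₂]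

theorem conj_rbfKernel_mul_rbfKernel_mul_exp (γ : ℝ) (u w z : ℂ) :
    starRingEnd ℂ (rbfKernel γ u w) * rbfKernel γ u z *
        (Real.exp (-(4 * u.im ^ 2) / γ ^ 2) : ℂ) =
      cexp (-(w ^ 2 + starRingEnd ℂ z ^ 2) / (γ : ℂ) ^ 2) *
        cexp (-(2 / (γ : ℂ) ^ 2) * ((u.re : ℂ) ^ 2 + (u.im : ℂ) ^ 2) +
          (2 * (w + starRingEnd ℂ z) / (γ : ℂ) ^ 2 * u.re +
            -2 * I * (w - starRingEnd ℂ z) / (γ : ℂ) ^ 2 * u.im)) := by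
  simp only [rbfKernel, ← exp_conj, ofReal_exp, ← Complex.exp_add]
  congr 1
  -- name the coordinates so that `re_add_im` below only rewrites the kernel arguments
  set x := u.re
  set y := u.im
  rw [← re_add_im u]
  simp only [map_div₀, map_neg, map_pow, map_sub, map_add, map_mul, conj_conj, conj_ofReal,
    conj_I]
  push_cast
  linear_combination (-2 * (y : ℂ) ^ 2 / (γ : ℂ) ^ 2) * I_sq

theorem rbf_kernel_inner_product (γ : ℝ) (hγ : 0 < γ) (z w : ℂ) :
    ((2 / (Real.pi * γ ^ 2) : ℝ) : ℂ) *
      ∫ u : ℂ, (starRingEnd ℂ) (rbfKernel γ u w) * rbfKernel γ u z *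
        (Real.exp (-(4 * u.im ^ 2) / γ ^ 2) : ℂ) = rbfKernel γ w z := by
  have hγ0 : (γ : ℂ) ≠ 0 := ofReal_ne_zero.2 hγ.ne'
  have hb : 0 < (2 / (γ : ℂ) ^ 2).re := by
    rw [← ofReal_ofNat, ← ofReal_pow, ← ofReal_div, ofReal_re]; positivity
  simp_rw [conj_rbfKernel_mul_rbfKernel_mul_exp, integral_const_mul,
    integral_cexp_neg_mul_re_sq_add_im_sq_add hb, rbfKernel]
  set v := starRingEnd ℂ z
  have hnorm : ((2 / (Real.pi * γ ^ 2) : ℝ) : ℂ) * (Real.pi / (2 / (γ : ℂ) ^ 2)) = 1 := by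
    push_cast; field_simp
  have hexp : -(w ^ 2 + v ^ 2) / (γ : ℂ) ^ 2 + ((2 * (w + v) / (γ : ℂ) ^ 2) ^ 2 +
      (-2 * I * (w - v) / (γ : ℂ) ^ 2) ^ 2) / (4 * (2 / (γ : ℂ) ^ 2)) =
      -(w - v) ^ 2 / (γ : ℂ) ^ 2 := by
    field_simp
    linear_combination 2 * (w - v) ^ 2 * I_sq
  rw [← hexp, Complex.exp_add, ← one_mul (cexp _ * cexp _), ← hnorm]
  ring
end

section
/- Let γ > 0 and let f ∈ H_γ. Then for every z = x + iy ∈ ℂ one has |f(z)| ≤ exp(2y²/γ²) · ‖f‖_{H_γ}. In particular, for every real x, |f(x)| ≤ ‖f‖_{H_γ}. -/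
open MeasureTheory Complex

/-- The norm of the RBF space `H_γ`. -/
noncomputable def rbfNorm (γ : ℝ) (f : ℂ → ℂ) : ℝ :=
  Real.sqrt ((∫⁻ z : ℂ, ENNReal.ofReal (rbfDensity γ f z)).toReal)
/-!
Multiplication by `exp (u² / γ²)` carries `H_γ` into the Fock space of entire `F` with
`∫ |F w|² exp (-α |w|²) < ∞`, `α = 2 / γ²`, because
`|exp (u² / γ²)|² exp (-α |u|²) = exp (-4 (Im u)² / γ²)`. In the Fock space the Weyl translation
`F ↦ F (z + ·) exp (-α w z̄ - α |z|² / 2)` preserves the weighted integral and moves `z` to `0`.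
At `0`, the Gaussian weight is rotation invariant, so averaging over rotations and applying the
sub-mean-value inequality `|F 0|² ≤ ⨍ |F (e^{iθ} w)|² dθ` on each circle gives
`(π / α) |F 0|² ≤ ∫ |F w|² exp (-α |w|²)`. Unwinding, `|f z|² exp (-4 (Im z)² / γ²) ≤ ‖f‖²`.
-/

open Set
open scoped Real ENNReal ComplexConjugate

theorem Real.norm_circleAverage_le {E : Type*} [NormedAddCommGroup E] [NormedSpace ℝ E]
    (g : ℂ → E) (c : ℂ) (R : ℝ) :
    ‖Real.circleAverage g c R‖ ≤ Real.circleAverage (fun w => ‖g w‖) c R := by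
  rw [Real.circleAverage_def, Real.circleAverage_def, norm_smul,
    Real.norm_of_nonneg (by positivity), smul_eq_mul]
  gcongr
  exact intervalIntegral.norm_integral_le_integral_norm (by positivity)

theorem DiffContOnCl.sq_norm_le_circleAverage {g : ℂ → ℂ} {c : ℂ} {R : ℝ}
    (hg : DiffContOnCl ℂ g (Metric.ball c |R|)) :
    ‖g c‖ ^ 2 ≤ Real.circleAverage (fun w => ‖g w‖ ^ 2) c R := by
  have hmean : Real.circleAverage (fun w => g w * g w) c R = g c * g c :=
    (hg.smul hg).circleAverage
  calc ‖g c‖ ^ 2 = ‖Real.circleAverage (fun w => g w * g w) c R‖ := by rw [hmean, norm_mul, sq]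
    _ ≤ Real.circleAverage (fun w => ‖g w‖ ^ 2) c R := by
      simpa only [norm_mul, sq] using Real.norm_circleAverage_le (fun w => g w * g w) c R

theorem lintegral_comp_circle_mul (a : Circle) (g : ℂ → ℝ≥0∞) :
    ∫⁻ w, g (a * w) = ∫⁻ w, g w :=
  (rotation a).measurePreserving.lintegral_comp_emb
    (rotation a).toHomeomorph.measurableEmbedding g

theorem lintegral_ofReal_exp_neg_mul_sq_norm {α : ℝ} (hα : 0 < α) :
    ∫⁻ w : ℂ, ENNReal.ofReal (Real.exp (-α * ‖w‖ ^ 2)) = ENNReal.ofReal (π / α) := by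
  have hint : ∫ w : ℂ, Real.exp (-α * ‖w‖ ^ 2) = π / α := by
    simpa using GaussianFourier.integral_rexp_neg_mul_sq_norm (V := ℂ) hα
  rw [← hint, ofReal_integral_eq_lintegral_ofReal
    (Integrable.of_integral_ne_zero (by rw [hint]; positivity))
    (Filter.Eventually.of_forall fun w => (Real.exp_pos _).le)]

theorem Differentiable.ofReal_two_pi_mul_sq_norm_le_lintegral {g : ℂ → ℂ}
    (hg : Differentiable ℂ g) :
    ENNReal.ofReal (2 * π * ‖g 0‖ ^ 2)
      ≤ ∫⁻ θ in Ioc 0 (2 * π), ENNReal.ofReal (‖g (cexp (θ * I))‖ ^ 2) := by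
  have hcont : Continuous fun θ : ℝ => ‖g (cexp (θ * I))‖ ^ 2 :=
    (hg.continuous.comp (by fun_prop)).norm.pow 2
  have hmean := (hg.diffContOnCl (s := Metric.ball 0 |1|)).sq_norm_le_circleAverage
  rw [Real.circleAverage_def, smul_eq_mul, intervalIntegral.integral_of_le (by positivity)] at hmean
  simp only [circleMap, zero_add, Complex.ofReal_one, one_mul] at hmean
  rw [← ofReal_integral_eq_lintegral_ofReal hcont.integrableOn_Ioc
    (Filter.Eventually.of_forall fun θ => by positivity)]
  gcongr
  rwa [← le_inv_mul_iff₀ (by positivity)]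

theorem Differentiable.ofReal_mul_sq_norm_le_lintegral_gaussian {G : ℂ → ℂ}
    (hG : Differentiable ℂ G) {α : ℝ} (hα : 0 < α) :
    ENNReal.ofReal (π / α) * ENNReal.ofReal (‖G 0‖ ^ 2)
      ≤ ∫⁻ w, ENNReal.ofReal (‖G w‖ ^ 2 * Real.exp (-α * ‖w‖ ^ 2)) := by
  set D : ℂ → ℝ≥0∞ := fun w => ENNReal.ofReal (‖G w‖ ^ 2 * Real.exp (-α * ‖w‖ ^ 2))
  set T : ℝ → ℂ → ℝ≥0∞ := fun θ w => D (cexp (θ * I) * w)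
  have hrot : ∀ θ : ℝ, ∫⁻ w, T θ w = ∫⁻ w, D w := fun θ => by
    simpa only [T, Circle.coe_exp] using lintegral_comp_circle_mul (Circle.exp θ) D
  have hT : ∀ θ w, T θ w = ENNReal.ofReal (‖G (cexp (θ * I) * w)‖ ^ 2)
      * ENNReal.ofReal (Real.exp (-α * ‖w‖ ^ 2)) := fun θ w => by
    simp only [T, D, norm_mul, Complex.norm_exp_ofReal_mul_I, one_mul]
    rw [ENNReal.ofReal_mul (by positivity)]
  have hmeas : AEMeasurable (Function.uncurry fun w θ => T θ w)
      (volume.prod (volume.restrict (Ioc 0 (2 * π)))) := by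
    have := hG.continuous
    exact (ENNReal.continuous_ofReal.comp (by fun_prop :
      Continuous fun p : ℂ × ℝ => ‖G (cexp (p.2 * I) * p.1)‖ ^ 2
        * Real.exp (-α * ‖cexp (p.2 * I) * p.1‖ ^ 2))).aemeasurable
  have h2π : ENNReal.ofReal (2 * π) ≠ 0 := by simp [Real.pi_pos]
  refine (ENNReal.mul_le_mul_iff_right h2π ENNReal.ofReal_ne_top).1 ?_
  calc ENNReal.ofReal (2 * π) * (ENNReal.ofReal (π / α) * ENNReal.ofReal (‖G 0‖ ^ 2))
      = ∫⁻ w, ENNReal.ofReal (2 * π * ‖G 0‖ ^ 2) * ENNReal.ofReal (Real.exp (-α * ‖w‖ ^ 2)) := by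
        rw [lintegral_const_mul' _ _ ENNReal.ofReal_ne_top,
          lintegral_ofReal_exp_neg_mul_sq_norm hα,
          ENNReal.ofReal_mul (p := 2 * π) (by positivity)]
        ring
    _ ≤ ∫⁻ w, ∫⁻ θ in Ioc 0 (2 * π), T θ w := by
        gcongr with w
        simp_rw [hT, lintegral_mul_const' _ _ ENNReal.ofReal_ne_top]
        gcongr
        have hGw : Differentiable ℂ fun u => G (u * w) := hG.comp (differentiable_id.mul_const w)
        simpa only [zero_mul] using hGw.ofReal_two_pi_mul_sq_norm_le_lintegral
    _ = ∫⁻ θ in Ioc 0 (2 * π), ∫⁻ w, D w := by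
        rw [lintegral_lintegral_swap hmeas]
        simp_rw [hrot]
    _ = ENNReal.ofReal (2 * π) * ∫⁻ w, D w := by
        rw [setLIntegral_const, Real.volume_Ioc, sub_zero, mul_comm]

noncomputable def fockTranslate (α : ℝ) (z : ℂ) (F : ℂ → ℂ) (w : ℂ) : ℂ :=
  F (z + w) * cexp (-α * (w * conj z) - α * ‖z‖ ^ 2 / 2)

theorem Differentiable.fockTranslate {F : ℂ → ℂ} (hF : Differentiable ℂ F) (α : ℝ) (z : ℂ) :
    Differentiable ℂ (fockTranslate α z F) :=
  (hF.comp (differentiable_id.const_add z)).mul (by fun_prop)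

theorem sq_norm_fockTranslate_mul_exp (α : ℝ) (z : ℂ) (F : ℂ → ℂ) (w : ℂ) :
    ‖fockTranslate α z F w‖ ^ 2 * Real.exp (-α * ‖w‖ ^ 2)
      = ‖F (z + w)‖ ^ 2 * Real.exp (-α * ‖z + w‖ ^ 2) := by
  have hre : (-α * (w * conj z) - α * ‖z‖ ^ 2 / 2 : ℂ).re
      = -α * (z * conj w).re - α * ‖z‖ ^ 2 / 2 := by
    simp only [Complex.sub_re, Complex.mul_re, Complex.neg_re, Complex.neg_im, Complex.ofReal_re,
      Complex.ofReal_im, Complex.conj_re, Complex.conj_im, Complex.div_ofNat_re, sq]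
    ring
  rw [fockTranslate, norm_mul, Complex.norm_exp, hre, mul_pow, mul_assoc, sq (Real.exp _),
    ← Real.exp_add, ← Real.exp_add]
  congr 2
  rw [Complex.sq_norm, Complex.sq_norm, Complex.sq_norm, Complex.normSq_add]
  ring

theorem Differentiable.ofReal_mul_le_lintegral_fock {F : ℂ → ℂ} (hF : Differentiable ℂ F)
    {α : ℝ} (hα : 0 < α) (z : ℂ) :
    ENNReal.ofReal (π / α) * ENNReal.ofReal (‖F z‖ ^ 2 * Real.exp (-α * ‖z‖ ^ 2))
      ≤ ∫⁻ w, ENNReal.ofReal (‖F w‖ ^ 2 * Real.exp (-α * ‖w‖ ^ 2)) := by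
  have hcenter : ‖_root_.fockTranslate α z F 0‖ ^ 2 = ‖F z‖ ^ 2 * Real.exp (-α * ‖z‖ ^ 2) := by
    simpa using sq_norm_fockTranslate_mul_exp α z F 0
  calc ENNReal.ofReal (π / α) * ENNReal.ofReal (‖F z‖ ^ 2 * Real.exp (-α * ‖z‖ ^ 2))
      = ENNReal.ofReal (π / α) * ENNReal.ofReal (‖_root_.fockTranslate α z F 0‖ ^ 2) := by
        rw [hcenter]
    _ ≤ ∫⁻ w, ENNReal.ofReal (‖_root_.fockTranslate α z F w‖ ^ 2 * Real.exp (-α * ‖w‖ ^ 2)) :=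
        (hF.fockTranslate α z).ofReal_mul_sq_norm_le_lintegral_gaussian hα
    _ = ∫⁻ w, ENNReal.ofReal (‖F (z + w)‖ ^ 2 * Real.exp (-α * ‖z + w‖ ^ 2)) := by
        simp_rw [sq_norm_fockTranslate_mul_exp]
    _ = ∫⁻ w, ENNReal.ofReal (‖F w‖ ^ 2 * Real.exp (-α * ‖w‖ ^ 2)) :=
        lintegral_add_left_eq_self (fun w => ENNReal.ofReal (‖F w‖ ^ 2 * Real.exp (-α * ‖w‖ ^ 2))) z

theorem sq_norm_mul_cexp_sq_div_mul_exp (γ : ℝ) (f : ℂ → ℂ) (u : ℂ) :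
    ‖f u * cexp (u ^ 2 / γ ^ 2)‖ ^ 2 * Real.exp (-(2 / γ ^ 2) * ‖u‖ ^ 2)
      = ‖f u‖ ^ 2 * Real.exp (-(4 * u.im ^ 2) / γ ^ 2) := by
  have hre : (u ^ 2 / (γ : ℂ) ^ 2).re = (u.re ^ 2 - u.im ^ 2) / γ ^ 2 := by
    rw [← Complex.ofReal_pow, Complex.div_ofReal_re, sq u, Complex.mul_re]
    ring
  rw [norm_mul, Complex.norm_exp, hre, mul_pow, mul_assoc, sq (Real.exp _), ← Real.exp_add,
    ← Real.exp_add, Complex.sq_norm u, Complex.normSq_apply]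
  congr 2
  ring

theorem ofReal_sq_norm_mul_exp_le_lintegral_rbfDensity {γ : ℝ} (hγ : γ ≠ 0) {f : ℂ → ℂ}
    (hf : Differentiable ℂ f) (z : ℂ) :
    ENNReal.ofReal (‖f z‖ ^ 2 * Real.exp (-(4 * z.im ^ 2) / γ ^ 2))
      ≤ ∫⁻ w, ENNReal.ofReal (rbfDensity γ f w) := by
  have hfock := (hf.mul (by fun_prop : Differentiable ℂ fun u => cexp (u ^ 2 / γ ^ 2))
    ).ofReal_mul_le_lintegral_fock (α := 2 / γ ^ 2) (by positivity) z
  simp only [Pi.mul_apply, sq_norm_mul_cexp_sq_div_mul_exp] at hfock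
  have hdensity : ∀ w, ENNReal.ofReal (rbfDensity γ f w) = ENNReal.ofReal (2 / (π * γ ^ 2))
      * ENNReal.ofReal (‖f w‖ ^ 2 * Real.exp (-(4 * w.im ^ 2) / γ ^ 2)) := fun w => by
    rw [rbfDensity, mul_assoc, ENNReal.ofReal_mul (by positivity)]
  have hconst : ENNReal.ofReal (2 / (π * γ ^ 2)) * ENNReal.ofReal (π / (2 / γ ^ 2)) = 1 := by
    rw [← ENNReal.ofReal_mul (by positivity), ← ENNReal.ofReal_one]
    congr 1
    field_simp
  calc ENNReal.ofReal (‖f z‖ ^ 2 * Real.exp (-(4 * z.im ^ 2) / γ ^ 2))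
      = ENNReal.ofReal (2 / (π * γ ^ 2)) * (ENNReal.ofReal (π / (2 / γ ^ 2))
          * ENNReal.ofReal (‖f z‖ ^ 2 * Real.exp (-(4 * z.im ^ 2) / γ ^ 2))) := by
        rw [← mul_assoc, hconst, one_mul]
    _ ≤ ENNReal.ofReal (2 / (π * γ ^ 2))
          * ∫⁻ w, ENNReal.ofReal (‖f w‖ ^ 2 * Real.exp (-(4 * w.im ^ 2) / γ ^ 2)) := by
        gcongr
    _ = ∫⁻ w, ENNReal.ofReal (rbfDensity γ f w) := by
        rw [← lintegral_const_mul' _ _ ENNReal.ofReal_ne_top]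
        simp_rw [hdensity]

theorem rbf_estimate (γ : ℝ) (hγ : 0 < γ) (f : ℂ → ℂ)
    (hf : Differentiable ℂ f)
    (hf2 : (∫⁻ z : ℂ, ENNReal.ofReal (rbfDensity γ f z)) < ⊤) :
    (∀ z : ℂ, ‖f z‖ ≤ Real.exp (2 * z.im ^ 2 / γ ^ 2) * rbfNorm γ f) ∧
    (∀ x : ℝ, ‖f (x : ℂ)‖ ≤ rbfNorm γ f) := by
  have hbound : ∀ z : ℂ, ‖f z‖ ≤ Real.exp (2 * z.im ^ 2 / γ ^ 2) * rbfNorm γ f := by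
    intro z
    have hz := ENNReal.toReal_mono hf2.ne
      (ofReal_sq_norm_mul_exp_le_lintegral_rbfDensity hγ.ne' hf z)
    rw [ENNReal.toReal_ofReal (by positivity)] at hz
    have hweight : Real.exp (-(4 * z.im ^ 2) / γ ^ 2) = Real.exp (-(2 * z.im ^ 2 / γ ^ 2)) ^ 2 := by
      rw [← Real.exp_nat_mul]
      ring_nf
    calc ‖f z‖ = Real.exp (2 * z.im ^ 2 / γ ^ 2)
          * √(‖f z‖ ^ 2 * Real.exp (-(4 * z.im ^ 2) / γ ^ 2)) := by
          rw [hweight, ← mul_pow, Real.sqrt_sq (by positivity), Real.exp_neg]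
          field_simp
      _ ≤ Real.exp (2 * z.im ^ 2 / γ ^ 2) * rbfNorm γ f := by
          rw [rbfNorm]
          gcongr
  exact ⟨hbound, fun x => by simpa using hbound x⟩
end

section
/- Let γ > 0 and let f : ℂ → ℂ be entire with power series f(z) = ∑_{n=0}^∞ a_n zⁿ (valid for all z ∈ ℂ). Then f belongs to the RBF space H_γ if and only if ∑_{k=0}^∞ (k!·γ^{2k}/2^k) · |∑_{j=0}^{⌊k/2⌋} a_{k−2j}/(γ^{2j} j!)|² < ∞. -/
/-!
Multiplying by the Gaussian factor `exp (z² / γ²)` turns the RBF weight into a radial one: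
`|exp (z² / γ²) f z|² exp (-2 |z|² / γ²) = |f z|² exp (-4 (Im z)² / γ²)`. The Taylor coefficients
`b_k` of `g = exp (z² / γ²) f` are the inner sums of the statement (Cauchy product with the
exponential series, grouped by degree). In polar coordinates, Parseval's identity on each circle gives the
circle average of `|g|²` as `∑ |b_k|² r^(2k)`, and the Gaussian moments
`∫ r^(2k+1) exp (-2 r² / γ²) dr` produce the weights `k! γ^(2k) / 2^k`.
-/

open MeasureTheory Complex

open Filter Finset Set
open scoped Nat Real

theorem tsum_ofReal_lt_top_iff_summable {ι : Type*} {t : ι → ℝ} (ht : ∀ i, 0 ≤ t i) :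
    ∑' i, ENNReal.ofReal (t i) < ⊤ ↔ Summable t :=
  ⟨fun h => (ENNReal.summable_toReal h.ne).congr fun i => ENNReal.toReal_ofReal (ht i),
    Summable.tsum_ofReal_lt_top⟩

section PowerSeries

variable {𝕜 : Type*} [NontriviallyNormedField 𝕜] {a : ℕ → 𝕜} {f : 𝕜 → 𝕜}

theorem FormalMultilinearSeries.radius_ofScalars_eq_top_of_hasSum
    (hf : ∀ z, HasSum (fun n => a n * z ^ n) (f z)) :
    (ofScalars 𝕜 a).radius = ⊤ := by
  refine ENNReal.eq_top_of_forall_nnreal_le fun r => ?_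
  obtain ⟨z, hz⟩ := NormedField.exists_lt_norm 𝕜 r
  refine le_trans (by exact_mod_cast hz.le) (le_radius_of_tendsto _ (r := ‖z‖₊) (l := 0) ?_)
  simpa [ofScalars_norm] using (hf z).summable.tendsto_atTop_zero.norm

theorem summable_norm_mul_pow_of_hasSum (hf : ∀ z, HasSum (fun n => a n * z ^ n) (f z))
    (z : 𝕜) : Summable fun n => ‖a n‖ * ‖z‖ ^ n := by
  simpa [FormalMultilinearSeries.ofScalars_norm] using
    (FormalMultilinearSeries.ofScalars 𝕜 a).summable_norm_mul_pow (r := ‖z‖₊)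
      (by simp [FormalMultilinearSeries.radius_ofScalars_eq_top_of_hasSum hf])

theorem continuous_of_hasSum_mul_pow [CompleteSpace 𝕜]
    (hf : ∀ z, HasSum (fun n => a n * z ^ n) (f z)) : Continuous f := by
  set p := FormalMultilinearSeries.ofScalars 𝕜 a
  have hr : p.radius = ⊤ := FormalMultilinearSeries.radius_ofScalars_eq_top_of_hasSum hf
  have hp : f = p.sum := funext fun z => (hf z).unique <| by
    simpa [p, FormalMultilinearSeries.ofScalars_apply_eq, mul_comm] using
      p.hasSum (x := z) (by simp [hr])
  rw [hp, ← continuousOn_univ]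
  simpa [hr] using p.continuousOn

end PowerSeries

noncomputable def rbfCoeff (γ : ℝ) (a : ℕ → ℂ) (k : ℕ) : ℂ :=
  ∑ j ∈ range (k / 2 + 1), a (k - 2 * j) / ((γ : ℂ) ^ (2 * j) * (j.factorial : ℂ))

theorem hasSum_rbfCoeff_mul_pow {γ : ℝ} {a : ℕ → ℂ} {f : ℂ → ℂ}
    (hf : ∀ z, HasSum (fun n => a n * z ^ n) (f z)) (z : ℂ) :
    HasSum (fun k => rbfCoeff γ a k * z ^ k) (cexp (z ^ 2 / γ ^ 2) * f z) := by
  set w := z ^ 2 / (γ : ℂ) ^ 2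
  set u : ℕ → ℂ := fun j => w ^ j / j.factorial
  set v : ℕ → ℂ := fun n => a n * z ^ n
  have hu : HasSum u (cexp w) := by
    rw [Complex.exp_eq_exp_ℂ]
    exact NormedSpace.expSeries_div_hasSum_exp w
  have hu_norm : Summable fun j => ‖u j‖ := by
    simpa [u] using Real.summable_pow_div_factorial ‖w‖
  have hv_norm : Summable fun n => ‖v n‖ := by
    simpa [v] using summable_norm_mul_pow_of_hasSum hf z
  have hprod := HasSum.mul (f := u) (g := v) hu (hf z)
    (summable_mul_of_summable_norm hu_norm hv_norm)
  refine (hprod.tsum_fiberwise fun p => 2 * p.1 + p.2).congr_fun fun k => ?_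
  have hfiber : (fun p : ℕ × ℕ => 2 * p.1 + p.2) ⁻¹' {k} =
      ↑((range (k / 2 + 1)).image fun j => (j, k - 2 * j)) := by
    ext ⟨j, n⟩
    simp only [Set.mem_preimage, Set.mem_singleton_iff, coe_image, coe_range, Set.mem_image,
      Set.mem_Iio, Prod.mk.injEq]
    constructor
    · rintro rfl
      exact ⟨j, by omega, rfl, by omega⟩
    · rintro ⟨i, hi, rfl, rfl⟩
      omega
  rw [hfiber, Finset.tsum_subtype' (f := fun p : ℕ × ℕ => u p.1 * v p.2),
    sum_image fun i _ j _ h => congrArg Prod.fst h, rbfCoeff, sum_mul]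
  refine sum_congr rfl fun j hj => ?_
  have hjk : 2 * j + (k - 2 * j) = k := by
    rw [Finset.mem_range] at hj
    omega
  simp only [u, v, w]
  rw [← hjk, pow_add, pow_mul, hjk]
  ring

open Polynomial in
theorem sum_range_sq_norm_eq_circleAverage (c : ℕ → ℂ) (N : ℕ) :
    ∑ k ∈ range N, ‖c k‖ ^ 2 =
      Real.circleAverage (fun w => ‖∑ k ∈ range N, c k * w ^ k‖ ^ 2) 0 1 := by
  set P : ℂ[X] := ∑ k ∈ range N, C (c k) * X ^ k
  have hcoeff : ∀ i, P.coeff i = if i ∈ range N then c i else 0 := fun i => by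
    simp [P, finsetSum_coeff]
  have heval : ∀ w, P.eval w = ∑ k ∈ range N, c k * w ^ k := fun w => by simp [P, eval_finsetSum]
  calc ∑ k ∈ range N, ‖c k‖ ^ 2 = ∑ k ∈ range N, ‖P.coeff k‖ ^ 2 :=
        sum_congr rfl fun k hk => by rw [hcoeff, if_pos hk]
    _ = ∑ k ∈ P.support, ‖P.coeff k‖ ^ 2 := by
        refine (sum_subset (fun i hi => ?_) fun i _ hi => ?_).symm
        · by_contra h
          exact mem_support_iff.1 hi (by rw [hcoeff, if_neg h])
        · rw [notMem_support_iff.1 hi, norm_zero, sq, mul_zero]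
    _ = _ := by simp_rw [sum_sq_norm_coeff_eq_circleAverage, heval]

theorem hasSum_sq_norm_mul_pow_circleAverage {b : ℕ → ℂ} {g : ℂ → ℂ}
    (hg : ∀ z, HasSum (fun k => b k * z ^ k) (g z)) (r : ℝ) :
    HasSum (fun k => ‖b k‖ ^ 2 * r ^ (2 * k)) (Real.circleAverage (fun z => ‖g z‖ ^ 2) 0 r) := by
  rw [hasSum_iff_tendsto_nat_of_nonneg (fun k => by rw [pow_mul]; positivity),
    Real.circleAverage_eq_circleAverage_zero_one]
  have hpartial : ∀ N, ∑ k ∈ range N, ‖b k‖ ^ 2 * r ^ (2 * k) =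
      Real.circleAverage (fun w => ‖∑ k ∈ range N, b k * (r * w + 0) ^ k‖ ^ 2) 0 1 := fun N => by
    simp_rw [add_zero, mul_pow, ← mul_assoc]
    rw [← sum_range_sq_norm_eq_circleAverage]
    refine sum_congr rfl fun k _ => ?_
    rw [norm_mul, norm_pow, norm_real, Real.norm_eq_abs, mul_pow, ← pow_mul, mul_comm k, pow_mul,
      pow_mul, sq_abs]
  simp_rw [hpartial, Real.circleAverage_def]
  refine Tendsto.const_smul (intervalIntegral.tendsto_integral_filter_of_dominated_convergence
    (fun _ => (∑' k, ‖b k‖ * |r| ^ k) ^ 2) (Eventually.of_forall fun N => ?_)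
    (Eventually.of_forall fun N => ae_of_all _ fun θ _ => ?_) intervalIntegrable_const
    (ae_of_all _ fun θ _ => ?_)) _
  · exact (by fun_prop : Continuous _).aestronglyMeasurable
  · have hw : ‖(r : ℂ) * circleMap 0 1 θ + 0‖ = |r| := by simp
    rw [norm_pow, norm_norm]
    gcongr
    refine (norm_sum_le _ _).trans ?_
    simp_rw [norm_mul, norm_pow, hw]
    exact (by simpa using summable_norm_mul_pow_of_hasSum hg r : Summable _).sum_le_tsum _
      fun k _ => by positivity
  · exact ((continuous_norm.pow 2).tendsto _).comp (hg _).tendsto_sum_nat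

theorem lintegral_ofReal_eq_lintegral_circleAverage {h : ℂ → ℝ} (hh : Continuous h)
    (h0 : 0 ≤ h) :
    ∫⁻ z, ENNReal.ofReal (h z) =
      ∫⁻ r in Ioi 0, ENNReal.ofReal (2 * π * r * Real.circleAverage h 0 r) := by
  have hcircle : ∀ r, ∫⁻ θ in Ioo (-π) π, ENNReal.ofReal (h (circleMap 0 r θ)) =
      ENNReal.ofReal (2 * π * Real.circleAverage h 0 r) := fun r => by
    have hcont : Continuous fun θ => h (circleMap 0 r θ) := hh.comp (continuous_circleMap 0 r)
    have hperiodic : Function.Periodic (fun θ => h (circleMap 0 r θ)) (2 * π) := fun θ => by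
      simp only [periodic_circleMap 0 r θ]
    rw [← ofReal_integral_eq_lintegral_ofReal (hcont.integrableOn_Icc.mono_set Ioo_subset_Icc_self)
        (ae_of_all _ fun θ => h0 _), ← integral_Ioc_eq_integral_Ioo,
      ← intervalIntegral.integral_of_le (by linarith [Real.pi_pos]), Real.circleAverage_def,
      smul_eq_mul, mul_inv_cancel_left₀ (by positivity)]
    congr 1
    simpa [two_mul] using hperiodic.intervalIntegral_add_eq (-π) 0
  have hmeas : Measurable fun p : ℝ × ℝ =>
      ENNReal.ofReal p.1 • ENNReal.ofReal (h (Complex.polarCoord.symm p)) := by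
    simp only [Complex.polarCoord_symm_apply, smul_eq_mul]
    fun_prop
  rw [← Complex.lintegral_comp_polarCoord_symm, polarCoord_target, Measure.volume_eq_prod,
    ← Measure.prod_restrict, lintegral_prod _ hmeas.aemeasurable]
  refine setLIntegral_congr_fun measurableSet_Ioi fun r hr => ?_
  have hpolar : ∀ θ, Complex.polarCoord.symm (r, θ) = circleMap 0 r θ := fun θ => by
    simp [circleMap, Complex.exp_mul_I, ← ofReal_cos, ← ofReal_sin]
  simp_rw [hpolar, smul_eq_mul]
  rw [lintegral_const_mul' _ _ ENNReal.ofReal_ne_top, hcircle, ← ENNReal.ofReal_mul hr.out.le]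
  ring_nf

theorem lintegral_pow_mul_exp_neg_mul_sq {c : ℝ} (hc : 0 < c) (k : ℕ) :
    ∫⁻ r in Ioi 0, ENNReal.ofReal (r ^ (2 * k + 1) * Real.exp (-c * r ^ 2)) =
      ENNReal.ofReal (k ! / (2 * c ^ (k + 1))) := by
  have hrpow : EqOn (fun r : ℝ => r ^ (2 * k + 1) * Real.exp (-c * r ^ 2))
      (fun r => r ^ (2 * k + 1 : ℝ) * Real.exp (-c * r ^ (2 : ℝ))) (Ioi 0) := fun r _ => by
    norm_cast
  have hq : (-1 : ℝ) < 2 * k + 1 := by linarith [k.cast_nonneg (α := ℝ)]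
  rw [← ofReal_integral_eq_lintegral_ofReal, setIntegral_congr_fun measurableSet_Ioi hrpow,
    integral_rpow_mul_exp_neg_mul_rpow two_pos hq hc]
  · congr 1
    rw [show (2 * k + 1 + 1 : ℝ) / 2 = k + 1 by ring, Real.Gamma_nat_eq_factorial, neg_div,
      show (2 * k + 1 + 1 : ℝ) / 2 = (k + 1 : ℕ) by push_cast; ring, Real.rpow_neg hc.le,
      Real.rpow_natCast]
    field_simp
  · refine (integrableOn_rpow_mul_exp_neg_mul_sq hc hq).congr_fun (fun r _ => ?_) measurableSet_Ioi
    norm_cast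
  · filter_upwards [self_mem_ae_restrict measurableSet_Ioi] with r (hr : 0 < r)
    positivity

theorem lintegral_sq_norm_mul_exp_neg_mul_sq_norm {b : ℕ → ℂ} {g : ℂ → ℂ}
    (hg : ∀ z, HasSum (fun k => b k * z ^ k) (g z)) {c : ℝ} (hc : 0 < c) :
    ∫⁻ z, ENNReal.ofReal (‖g z‖ ^ 2 * Real.exp (-c * ‖z‖ ^ 2)) =
      ∑' k, ENNReal.ofReal (π * k ! / c ^ (k + 1) * ‖b k‖ ^ 2) := by
  have hgc := continuous_of_hasSum_mul_pow hg
  rw [lintegral_ofReal_eq_lintegral_circleAverage (by fun_prop) fun z => by positivity]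
  have hcircle : ∀ r, Real.circleAverage (fun z => ‖g z‖ ^ 2 * Real.exp (-c * ‖z‖ ^ 2)) 0 r =
      Real.exp (-c * r ^ 2) * ∑' k, ‖b k‖ ^ 2 * r ^ (2 * k) := fun r => by
    rw [(hasSum_sq_norm_mul_pow_circleAverage hg r).tsum_eq, ← smul_eq_mul,
      ← Real.circleAverage_smul]
    refine Real.circleAverage_congr_sphere fun z hz => ?_
    rw [mem_sphere_zero_iff_norm.1 hz, sq_abs]
    simp [mul_comm]
  have hradial : ∀ r ∈ Ioi (0 : ℝ), ENNReal.ofReal (2 * π * r * Real.circleAverage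
        (fun z => ‖g z‖ ^ 2 * Real.exp (-c * ‖z‖ ^ 2)) 0 r) =
      ∑' k, ENNReal.ofReal (2 * π * ‖b k‖ ^ 2) *
        ENNReal.ofReal (r ^ (2 * k + 1) * Real.exp (-c * r ^ 2)) := fun r (hr : 0 < r) => by
    rw [hcircle, ← mul_assoc, ← tsum_mul_left, ENNReal.ofReal_tsum_of_nonneg
      (fun k => by positivity) ((hasSum_sq_norm_mul_pow_circleAverage hg r).summable.mul_left _)]
    refine tsum_congr fun k => ?_
    rw [← ENNReal.ofReal_mul (by positivity)]
    ring_nf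
  rw [setLIntegral_congr_fun measurableSet_Ioi hradial, lintegral_tsum fun k => by fun_prop]
  refine tsum_congr fun k => ?_
  rw [lintegral_const_mul' _ _ ENNReal.ofReal_ne_top, lintegral_pow_mul_exp_neg_mul_sq hc,
    ← ENNReal.ofReal_mul (by positivity)]
  congr 1
  field_simp

theorem rbfDensity_eq (γ : ℝ) (f : ℂ → ℂ) (z : ℂ) :
    rbfDensity γ f z =
      2 / (π * γ ^ 2) * (‖cexp (z ^ 2 / γ ^ 2) * f z‖ ^ 2 * Real.exp (-(2 / γ ^ 2) * ‖z‖ ^ 2)) := by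
  have hre : (z ^ 2 / (γ : ℂ) ^ 2).re = (z.re ^ 2 - z.im ^ 2) / γ ^ 2 := by
    rw [← ofReal_pow, div_ofReal_re, sq z, mul_re]
    ring
  have hnorm : ‖z‖ ^ 2 = z.re ^ 2 + z.im ^ 2 := by
    rw [Complex.sq_norm, normSq_apply]
    ring
  have hexponent : -(4 * z.im ^ 2) / γ ^ 2 =
      (2 : ℕ) * ((z.re ^ 2 - z.im ^ 2) / γ ^ 2) + -(2 / γ ^ 2) * (z.re ^ 2 + z.im ^ 2) := by
    push_cast
    ring
  rw [rbfDensity, norm_mul, Complex.norm_exp, hre, hnorm, hexponent, Real.exp_add,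
    Real.exp_nat_mul]
  ring

theorem rbf_sequential_characterization (γ : ℝ) (hγ : 0 < γ)
    (f : ℂ → ℂ) (a : ℕ → ℂ)
    (hf : ∀ z : ℂ, HasSum (fun n : ℕ => a n * z ^ n) (f z)) :
    (∫⁻ z : ℂ, ENNReal.ofReal (rbfDensity γ f z)) < ⊤ ↔
      Summable (fun k : ℕ =>
        ((k.factorial : ℝ) * γ ^ (2 * k) / 2 ^ k) *
          ‖∑ j ∈ Finset.range (k / 2 + 1),
              a (k - 2 * j) / ((γ : ℂ) ^ (2 * j) * (j.factorial : ℂ))‖ ^ 2) := by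
  have hmass : ∫⁻ z, ENNReal.ofReal (rbfDensity γ f z) =
      ∑' k, ENNReal.ofReal (k ! * γ ^ (2 * k) / 2 ^ k * ‖rbfCoeff γ a k‖ ^ 2) := by
    simp_rw [rbfDensity_eq, ENNReal.ofReal_mul (by positivity : (0 : ℝ) ≤ 2 / (π * γ ^ 2))]
    rw [lintegral_const_mul' _ _ ENNReal.ofReal_ne_top,
      lintegral_sq_norm_mul_exp_neg_mul_sq_norm (hasSum_rbfCoeff_mul_pow hf) (by positivity),
      ← ENNReal.tsum_mul_left]
    refine tsum_congr fun k => ?_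
    rw [← ENNReal.ofReal_mul (by positivity)]
    congr 1
    rw [div_pow, ← pow_mul, pow_succ 2 k, mul_add, mul_one, pow_add]
    field_simp
  rw [hmass, tsum_ofReal_lt_top_iff_summable fun k => by positivity]
  rfl
end

section
/- Let γ > 0. For all z, w ∈ ℂ one has ∫_ℝ exp(−(x − √2·conj(z))²/γ²) · exp(−(x − √2·w)²/γ²) dx = γ·√(π/2) · K_γ(w,z). In particular, for every z ∈ ℂ, ∫_ℝ |exp(−(x − √2·z)²/γ²)|² dx = γ·√(π/2) · exp(−(z − conj(z))²/γ²), so the L²(ℝ)-norm of x ↦ exp(−(x − √2·z)²/γ²) equals √(γ·√(π/2)) · exp(−(z − conj(z))²/(2γ²)). -/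
open MeasureTheory Complex
open scoped ComplexConjugate

/-! Completing the square, the product of Gaussians of width `γ` centred at `a, b ∈ ℂ` is
`exp(-2 (x - (a + b)/2)² / γ²) · exp(-(a - b)² / (2γ²))`, and the first factor integrates to
`γ √(π/2)` over `ℝ` even for a complex centre (by a contour shift). For `a = √2 conj z`,
`b = √2 w` the second factor is `K_γ(w, z)`. Since the conjugate of the feature at `z` is the
feature at `conj z`, taking `w = z` gives the squared `L²` norm. -/

theorem ofReal_cpow_one_half {x : ℝ} (hx : 0 ≤ x) : (x : ℂ) ^ (1 / 2 : ℂ) = (√x : ℝ) := by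
  rw [show (1 / 2 : ℂ) = ((1 / 2 : ℝ) : ℂ) by norm_num, ← ofReal_cpow hx, Real.sqrt_eq_rpow]

theorem integral_cexp_neg_sq_div_mul_cexp_neg_sq_div {γ : ℝ} (hγ : 0 < γ) (a b : ℂ) :
    ∫ x : ℝ, cexp (-((x : ℂ) - a) ^ 2 / (γ : ℂ) ^ 2) * cexp (-((x : ℂ) - b) ^ 2 / (γ : ℂ) ^ 2) =
      ((γ * √(Real.pi / 2) : ℝ) : ℂ) * cexp (-(a - b) ^ 2 / (2 * (γ : ℂ) ^ 2)) := by
  have hγ0 : (γ : ℂ) ≠ 0 := ofReal_ne_zero.mpr hγ.ne'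
  have hlead : (-2 / (γ : ℂ) ^ 2).re < 0 := by
    rw [← ofReal_ofNat, ← ofReal_pow, ← ofReal_neg, ← ofReal_div, ofReal_re]
    exact div_neg_of_neg_of_pos (by norm_num) (by positivity)
  have hquad (x : ℝ) :
      cexp (-((x : ℂ) - a) ^ 2 / (γ : ℂ) ^ 2) * cexp (-((x : ℂ) - b) ^ 2 / (γ : ℂ) ^ 2) =
        cexp (-2 / (γ : ℂ) ^ 2 * (x : ℂ) ^ 2 + 2 * (a + b) / (γ : ℂ) ^ 2 * x
          + -(a ^ 2 + b ^ 2) / (γ : ℂ) ^ 2) := by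
    rw [← Complex.exp_add]
    congr 1
    field_simp
    ring
  have hvar : (Real.pi : ℂ) / -(-2 / (γ : ℂ) ^ 2) = ((Real.pi / 2 * γ ^ 2 : ℝ) : ℂ) := by
    push_cast
    field_simp
  simp_rw [hquad]
  rw [integral_cexp_quadratic hlead, hvar, ofReal_cpow_one_half (by positivity),
    Real.sqrt_mul' _ (sq_nonneg γ), Real.sqrt_sq hγ.le, mul_comm (√_)]
  congr 2
  field_simp
  ring

theorem conj_cexp_neg_sq_div (γ x : ℝ) (a : ℂ) :
    conj (cexp (-((x : ℂ) - a) ^ 2 / (γ : ℂ) ^ 2)) =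
      cexp (-((x : ℂ) - conj a) ^ 2 / (γ : ℂ) ^ 2) := by
  rw [← exp_conj]
  simp [map_div₀]

theorem integral_norm_cexp_neg_sq_div_sq {γ : ℝ} (hγ : 0 < γ) (a : ℂ) :
    ∫ x : ℝ, ‖cexp (-((x : ℂ) - a) ^ 2 / (γ : ℂ) ^ 2)‖ ^ 2 =
      γ * √(Real.pi / 2) * Real.exp (2 * a.im ^ 2 / γ ^ 2) := by
  apply ofReal_injective
  have hnorm (x : ℝ) : ((‖cexp (-((x : ℂ) - a) ^ 2 / (γ : ℂ) ^ 2)‖ ^ 2 : ℝ) : ℂ) =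
      cexp (-((x : ℂ) - conj a) ^ 2 / (γ : ℂ) ^ 2) * cexp (-((x : ℂ) - a) ^ 2 / (γ : ℂ) ^ 2) := by
    rw [← conj_cexp_neg_sq_div, conj_mul', ofReal_pow]
  rw [← integral_complex_ofReal]
  simp_rw [hnorm]
  rw [integral_cexp_neg_sq_div_mul_cexp_neg_sq_div hγ, ← neg_sub, sub_conj]
  push_cast
  congr 2
  rw [neg_sq, mul_pow, I_sq]
  ring

theorem rbf_feature_map_inner (γ : ℝ) (hγ : 0 < γ) :
    (∀ z w : ℂ,
      ∫ x : ℝ,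
          Complex.exp (-((x : ℂ) - (Real.sqrt 2 : ℂ) * (starRingEnd ℂ) z) ^ 2 / (γ : ℂ) ^ 2) *
            Complex.exp (-((x : ℂ) - (Real.sqrt 2 : ℂ) * w) ^ 2 / (γ : ℂ) ^ 2) =
        ((γ * Real.sqrt (Real.pi / 2) : ℝ) : ℂ) * rbfKernel γ w z) ∧
    (∀ z : ℂ,
      ∫ x : ℝ,
          ‖Complex.exp (-((x : ℂ) - (Real.sqrt 2 : ℂ) * z) ^ 2 / (γ : ℂ) ^ 2)‖ ^ 2 =
        γ * Real.sqrt (Real.pi / 2) * Real.exp (4 * z.im ^ 2 / γ ^ 2)) ∧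
    (∀ z : ℂ,
      Real.sqrt (∫ x : ℝ,
          ‖Complex.exp (-((x : ℂ) - (Real.sqrt 2 : ℂ) * z) ^ 2 / (γ : ℂ) ^ 2)‖ ^ 2) =
        Real.sqrt (γ * Real.sqrt (Real.pi / 2)) * Real.exp (2 * z.im ^ 2 / γ ^ 2)) := by
  have hsqrt2 : √2 ^ 2 = 2 := Real.sq_sqrt zero_le_two
  have hnorm_sq (z : ℂ) :
      ∫ x : ℝ, ‖cexp (-((x : ℂ) - (√2 : ℂ) * z) ^ 2 / (γ : ℂ) ^ 2)‖ ^ 2 =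
        γ * √(Real.pi / 2) * Real.exp (4 * z.im ^ 2 / γ ^ 2) := by
    rw [integral_norm_cexp_neg_sq_div_sq hγ, im_ofReal_mul, mul_pow, hsqrt2]
    ring_nf
  refine ⟨fun z w => ?_, hnorm_sq, fun z => ?_⟩
  · have hscale : ((√2 : ℂ) * conj z - √2 * w) ^ 2 = 2 * (w - conj z) ^ 2 := by
      rw [← mul_sub, mul_pow, ← ofReal_pow, hsqrt2]
      push_cast
      ring
    rw [integral_cexp_neg_sq_div_mul_cexp_neg_sq_div hγ, hscale, rbfKernel]
    field_simp
  · rw [hnorm_sq, Real.sqrt_mul (by positivity), ← Real.exp_half]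
    ring_nf
end
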